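/- Let (P1,P2,P3) be a paddle in a 3-connected matroid M, i.e., a partition of E(M) into three 3-separating sets such that the local connectivity ⊓(Pi,Pj) = 2 for all distinct i,j. Then each Pi is coclosed: cl*(Pi) = Pi for each i ∈ {1,2,3}. -/

import Mathlib

open Set

namespace PaperDefs

variable {α : Type*}

/-- The rank of a set `X` in a matroid `M`, as an extended natural number:
the supremum of the cardinalities of independent subsets of `X`. -/
noncomputable def eRk (M : Matroid α) (X : Set α) : ℕ∞ :=
  ⨆ I ∈ {I | M.Indep I ∧ I ⊆ X}, I.encard

/-- Deletion of a set of elements from a matroid. -/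
def del (M : Matroid α) (D : Set α) : Matroid α := M.restrict (M.E \ D)

/-- Contraction of a set of elements in a matroid. -/
def con (M : Matroid α) (C : Set α) : Matroid α := (del M✶ C)✶

/-- A circuit: a minimal dependent set. -/
def Circuit (M : Matroid α) (C : Set α) : Prop :=
  M.Dep C ∧ ∀ D, D ⊂ C → M.Indep D

/-- A `k`-separation of `M`: a partition `(X, M.E \ X)` with connectivity
`λ(X) = r(X) + r(E−X) − r(M)` at most `k − 1`, and both sides of size at least `k`. -/
def kSeparation (M : Matroid α) (X : Set α) (k : ℕ) : Prop :=
  X ⊆ M.E ∧ eRk M X + eRk M (M.E \ X) ≤ eRk M M.E + ((k - 1 : ℕ) : ℕ∞) ∧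
    (k : ℕ∞) ≤ X.encard ∧ (k : ℕ∞) ≤ (M.E \ X).encard

/-- `M` is `n`-connected if it has no `k`-separations for `0 < k < n`. -/
def NConnected (M : Matroid α) (n : ℕ) : Prop :=
  ∀ k : ℕ, 0 < k → k < n → ∀ X : Set α, ¬ kSeparation M X k

/-- `X` is 3-separating in `M`: `λ_M(X) ≤ 2`. -/
def ThreeSeparating (M : Matroid α) (X : Set α) : Prop :=
  eRk M X + eRk M (M.E \ X) ≤ eRk M M.E + 2

/-- `X` is exactly 3-separating in `M`: `λ_M(X) = 2`. -/
def ExactlyThreeSeparating (M : Matroid α) (X : Set α) : Prop :=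
  eRk M X + eRk M (M.E \ X) = eRk M M.E + 2

/-- `N` is a simplification of `M`: `N` is obtained from `M` by deleting a set of
elements, `N` has no loops or parallel pairs (no circuits of size at most two), and
every element of `M` is in the closure of the ground set of `N`. -/
def IsSimplificationOf (N M : Matroid α) : Prop :=
  (∃ D ⊆ M.E, N = del M D) ∧ (∀ C, Circuit N C → 3 ≤ C.encard) ∧
    M.closure N.E = M.E

/-- `N` is a cosimplification of `M`: `N✶` is a simplification of `M✶`. -/
def IsCosimplificationOf (N M : Matroid α) : Prop :=
  IsSimplificationOf N✶ M✶

/-- `S` is a series class of `M`: a maximal nonempty set any two distinct elements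
of which form a series pair (a two-element cocircuit). -/
def IsSeriesClass (M : Matroid α) (S : Set α) : Prop :=
  S.Nonempty ∧ S ⊆ M.E ∧ (∀ a ∈ S, ∀ b ∈ S, a ≠ b → Circuit M✶ {a, b}) ∧
    (∀ a ∈ S, ∀ f, Circuit M✶ {a, f} → a ≠ f → f ∈ S)

/-- The full closure of `X` in `M`: the intersection of all sets containing `X ∩ M.E`
that are closed in both `M` and `M✶`. -/
def fullClosure (M : Matroid α) (X : Set α) : Set α :=
  ⋂₀ {F | X ∩ M.E ⊆ F ∧ M.closure F = F ∧ M✶.closure F = F}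

end PaperDefs

open PaperDefs

/-! Suppose `e ∈ cl*(P i) \ P i`, with `e ∈ P j`, and let `k` be the third index. Then `e` is a
coloop of `M \ P i`, so `r(E - P i - e) = r(E - P i) - 1`, while 3-connectivity makes `e` a
non-coloop of `M`, so `r(E - e) = r(M)`. Submodularity for `E - P i - e` and `P i ∪ P k`, whose
union is `E - e` and whose intersection is `P k`, gives `λ(P i) ≥ ⊓(P i, P k) + 1 = 3`, which
contradicts that `P i` is 3-separating. -/

namespace PaperDefs

variable {α : Type*} {M : Matroid α} {e : α} {n : ℕ}

theorem eRk_eq (M : Matroid α) (X : Set α) : eRk M X = M.eRk X := by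
  obtain ⟨I, hI⟩ := M.exists_isBasis' X
  refine le_antisymm (iSup₂_le fun J hJ ↦ hJ.1.encard_le_eRk_of_subset hJ.2) ?_
  exact le_iSup₂_of_le I ⟨hI.indep, hI.subset⟩ hI.encard_eq_eRk.ge

theorem kSeparation_singleton_one (he : e ∈ M.E) (hne : (M.E \ {e}).Nonempty)
    (hsep : M.eRk {e} + M.eRk (M.E \ {e}) ≤ M.eRank) : kSeparation M {e} 1 := by
  refine ⟨singleton_subset_iff.2 he, ?_, by simp, by simpa using hne⟩
  simpa [eRk_eq, Matroid.eRk_ground] using hsep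

theorem NConnected.eRank_ne_top (h : NConnected M n) (hn : 1 < n) : M.eRank ≠ ⊤ := by
  intro htop
  have hinf : M.E.Infinite := by
    rw [← encard_eq_top_iff, ← top_le_iff, ← htop]
    exact M.eRank_le_encard_ground
  obtain ⟨e, he⟩ := hinf.nonempty
  refine h 1 one_pos hn {e} (kSeparation_singleton_one he ?_ (by simp [htop]))
  exact (hinf.sdiff (finite_singleton e)).nonempty

theorem NConnected.not_isColoop (h : NConnected M n) (hn : 1 < n) (he : e ∈ M.E)
    (hne : (M.E \ {e}).Nonempty) : ¬ M.IsColoop e := by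
  intro hcol
  have hdrop : M.eRk (M.E \ {e}) + 1 = M.eRank := by
    rw [← Matroid.eRk_insert_eq_add_one
      ⟨he, (Matroid.isColoop_iff_notMem_closure_compl he).1 hcol⟩, insert_sdiff_singleton, insert_eq_of_mem he, Matroid.eRk_ground]
  refine h 1 one_pos hn {e} (kSeparation_singleton_one he hne ?_)
  rw [hcol.isNonloop.eRk_eq, add_comm, hdrop]

end PaperDefs

namespace Matroid

variable {α : Type*} {M : Matroid α} {A C X Y : Set α} {e : α}

theorem notMem_closure_of_mem_dual_closure (he : e ∈ M✶.closure X) (heX : e ∉ X) (heY : e ∉ Y)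
    (hXY : Disjoint X Y) : e ∉ M.closure Y := by
  intro heY'
  -- a circuit and a cocircuit never meet in exactly one element
  obtain ⟨K, hKX, hK, heK⟩ := (M✶.mem_closure_iff_exists_isCircuit heX).1 he
  obtain ⟨C, hCY, hC, heC⟩ := (M.mem_closure_iff_exists_isCircuit heY).1 heY'
  refine hC.inter_isCocircuit_ne_singleton (e := e) hK ?_
  refine subset_antisymm (fun x ⟨hxC, hxK⟩ ↦ ?_) (singleton_subset_iff.2 ⟨heC, heK⟩)
  obtain rfl | hxY := hCY hxC
  · rfl
  obtain rfl | hxX := hKX hxK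
  · rfl
  exact absurd hxY (hXY.notMem_of_mem_left hxX)

/-- In the paper's notation: `λ(A) ≥ ⊓(A, C) + 1`. -/
theorem eRank_add_eRk_add_one_le (he : e ∈ M✶.closure A) (heA : e ∉ A) (hcol : ¬ M.IsColoop e)
    (hA : A ⊆ M.E) (hC : C ⊆ M.E) (hAC : Disjoint A C) (heC : e ∉ C) :
    M.eRank + M.eRk C + 1 ≤ M.eRk (M.E \ A) + M.eRk (A ∪ C) := by
  set Y := (M.E \ A) \ {e}
  have heE : e ∈ M.E := M✶.closure_subset_ground A he
  have heY : e ∉ M.closure Y :=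
    notMem_closure_of_mem_dual_closure he heA (by simp [Y])
      (disjoint_sdiff_right.mono_right sdiff_subset)
  have hdrop : M.eRk Y + 1 = M.eRk (M.E \ A) := by
    rw [← eRk_insert_eq_add_one (X := Y) ⟨heE, heY⟩, insert_sdiff_singleton,
      insert_eq_of_mem (show e ∈ M.E \ A from ⟨heE, heA⟩)]
  have hspan : M.eRk (M.E \ {e}) = M.eRank :=
    (not_not.1 (isColoop_iff_sdiff_not_spanning.not.1 hcol)).eRk_eq
  have hinter : Y ∩ (A ∪ C) = C := by
    ext x
    have hxA := hAC.notMem_of_mem_right (a := x)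
    simp only [Y, mem_inter_iff, mem_sdiff, mem_union, mem_singleton_iff]
    constructor
    · tauto
    · exact fun hx ↦ ⟨⟨⟨hC hx, hxA hx⟩, fun h ↦ heC (h ▸ hx)⟩, Or.inr hx⟩
  have hunion : Y ∪ (A ∪ C) = M.E \ {e} := by
    ext x
    simp only [Y, mem_union, mem_sdiff, mem_singleton_iff]
    constructor
    · rintro (h | h | h)
      exacts [⟨h.1.1, h.2⟩, ⟨hA h, fun h' ↦ heA (h' ▸ h)⟩, ⟨hC h, fun h' ↦ heC (h' ▸ h)⟩]
    · tauto
  calc M.eRank + M.eRk C + 1 = M.eRk (Y ∩ (A ∪ C)) + M.eRk (Y ∪ (A ∪ C)) + 1 := by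
        rw [hinter, hunion, hspan, add_comm M.eRank]
    _ ≤ M.eRk Y + M.eRk (A ∪ C) + 1 := add_le_add (M.eRk_submod _ _) le_rfl
    _ = M.eRk (M.E \ A) + M.eRk (A ∪ C) := by rw [← hdrop]; ring

end Matroid

/-- If `(P 0, P 1, P 2)` is a paddle in a 3-connected matroid `M`,
then each petal `P i` is coclosed. -/
theorem statement_11 {α : Type*} (M : Matroid α) (P : Fin 3 → Set α)
    (h3 : NConnected M 3)
    (hdisj : ∀ i j : Fin 3, i ≠ j → Disjoint (P i) (P j))
    (hcover : (⋃ i, P i) = M.E)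
    (hsep : ∀ i, ThreeSeparating M (P i))
    (hloc : ∀ i j : Fin 3, i ≠ j →
      eRk M (P i) + eRk M (P j) = eRk M (P i ∪ P j) + 2) :
    ∀ i, M✶.closure (P i) = P i := by
  have hPE : ∀ i, P i ⊆ M.E := fun i ↦ hcover ▸ subset_iUnion P i
  have hfin : ∀ X, M.eRk X ≠ ⊤ :=
    fun X ↦ ne_top_of_le_ne_top (h3.eRank_ne_top (by norm_num)) (M.eRk_le_eRank X)
  intro i
  refine subset_antisymm (fun e he ↦ by_contra fun heP ↦ ?_) (M✶.subset_closure _ (hPE i))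
  obtain ⟨j, hej⟩ := mem_iUnion.1 (hcover ▸ M✶.closure_subset_ground _ he : e ∈ ⋃ i, P i)
  obtain ⟨k, hki, hkj⟩ : ∃ k, k ≠ i ∧ k ≠ j := by
    have : ∀ i j : Fin 3, ∃ k, k ≠ i ∧ k ≠ j := by decide
    exact this i j
  have hek : e ∉ P k := (hdisj j k hkj.symm).notMem_of_mem_left hej
  have hsep := hsep i
  have hloc := hloc i k hki.symm
  simp only [ThreeSeparating, eRk_eq, Matroid.eRk_ground] at hsep hloc
  obtain ⟨x, hx⟩ : (P k).Nonempty := nonempty_iff_ne_empty.2 fun h ↦ by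
    rw [h, union_empty, M.eRk_empty, add_zero] at hloc
    have := (ENat.add_lt_add_iff_left (hfin (P i))).2 (show (0 : ℕ∞) < 2 by norm_num)
    rw [add_zero, ← hloc] at this
    exact this.false
  have hcol := h3.not_isColoop (by norm_num) (hPE j hej) ⟨x, hPE k hx, fun h ↦ hek (h ▸ hx)⟩
  have key := Matroid.eRank_add_eRk_add_one_le he heP hcol (hPE i) (hPE k) (hdisj i k hki.symm) hek
  lift M.eRank to ℕ using M.eRk_ground ▸ hfin M.E with r
  lift M.eRk (P i) to ℕ using hfin _ with a
  lift M.eRk (P k) to ℕ using hfin _ with c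
  lift M.eRk (M.E \ P i) to ℕ using hfin _ with b
  lift M.eRk (P i ∪ P k) to ℕ using hfin _ with d
  norm_cast at hsep hloc key
  omega
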